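/- arXiv:1803.10131 — 10 statements merged into one kernel-verified Lean document; each statement's English description precedes it below -/
import Mathlib

section
/- Open games with sequential composition form a category: composition of open games is associative up to natural isomorphism of strategy sets (i.e., there is a bijection Σ(𝒦∘(ℋ∘𝒢)) ≅ Σ((𝒦∘ℋ)∘𝒢) that preserves play, coplay, and equilibrium functions). -/
/-- An open game `(X,S) → (Y,R)`: a set of strategy profiles together with
play, coplay and equilibrium functions. -/
structure OpenGame (X S Y R : Type) where
  Strat : Type
  play : Strat → X → Y
  coplay : Strat → X → R → S
  equil : X → (Y → R) → Set Strat

namespace OpenGame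

/-- Sequential composition: `comp G H` is `H ∘ G` (first `G`, then `H`). -/
def comp {X S Y R Z Q : Type} (G : OpenGame X S Y R) (H : OpenGame Y R Z Q) :
    OpenGame X S Z Q where
  Strat := G.Strat × H.Strat
  play := fun p x => H.play p.2 (G.play p.1 x)
  coplay := fun p x q => G.coplay p.1 x (H.coplay p.2 (G.play p.1 x) q)
  equil := fun x k =>
    {p | p.1 ∈ G.equil x (fun y => H.coplay p.2 y (k (H.play p.2 y))) ∧
         p.2 ∈ H.equil (G.play p.1 x) k}

/-- Monoidal product of open games. -/
def tensor {X S Y R X' S' Y' R' : Type}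
    (G : OpenGame X S Y R) (H : OpenGame X' S' Y' R') :
    OpenGame (X × X') (S × S') (Y × Y') (R × R') where
  Strat := G.Strat × H.Strat
  play := fun p x => (G.play p.1 x.1, H.play p.2 x.2)
  coplay := fun p x r => (G.coplay p.1 x.1 r.1, H.coplay p.2 x.2 r.2)
  equil := fun x k =>
    {p | p.1 ∈ G.equil x.1 (fun y => (k (y, H.play p.2 x.2)).1) ∧
         p.2 ∈ H.equil x.2 (fun y' => (k (G.play p.1 x.1, y')).2)}

/-- A (globular) morphism of open games: a map of strategy profiles preserving
play, coplay, and mapping equilibria to equilibria. -/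
def IsMorphism {X S Y R : Type} (G H : OpenGame X S Y R) (α : G.Strat → H.Strat) : Prop :=
  (∀ σ x, G.play σ x = H.play (α σ) x) ∧
  (∀ σ x r, G.coplay σ x r = H.coplay (α σ) x r) ∧
  (∀ σ x k, σ ∈ G.equil x k → α σ ∈ H.equil x k)

/-- Isomorphism of open games: a bijection of strategy profiles preserving play,
coplay, and equilibria in both directions. -/
def Isomorphic {X S Y R : Type} (G H : OpenGame X S Y R) : Prop :=
  ∃ e : G.Strat ≃ H.Strat,
    (∀ σ x, G.play σ x = H.play (e σ) x) ∧
    (∀ σ x r, G.coplay σ x r = H.coplay (e σ) x r) ∧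
    (∀ σ x k, σ ∈ G.equil x k ↔ e σ ∈ H.equil x k)

/-- The identity open game on `(X,S)`. -/
def idOG (X S : Type) : OpenGame X S X S where
  Strat := Unit
  play := fun _ x => x
  coplay := fun _ _ s => s
  equil := fun _ _ => Set.univ

end OpenGame

open OpenGame

/- Both bracketings hand `G` the same continuation
`y ↦ H.coplay τ y (K.coplay υ (H.play τ y) (k (K.play υ (H.play τ y))))`, so the two
equilibrium conditions are definitionally `(a ∧ b) ∧ c` and `a ∧ (b ∧ c)`. -/
/-- composition of open games is associative up to isomorphism. -/
theorem comp_assoc {X S Y R Z Q W P : Type}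
    (G : OpenGame X S Y R) (H : OpenGame Y R Z Q) (K : OpenGame Z Q W P) :
    Isomorphic (comp (comp G H) K) (comp G (comp H K)) :=
  ⟨Equiv.prodAssoc _ _ _, fun _ _ => rfl, fun _ _ _ => rfl, fun _ _ _ => and_assoc⟩
end

section
/- Identity laws hold up to isomorphism: for any open game 𝒢 : (X,S) → (Y,R), the composites 𝒢 ∘ id_{(X,S)} and id_{(Y,R)} ∘ 𝒢 are isomorphic to 𝒢, where id_{(X,S)} is the strategically trivial open game with Σ = 1, play P(*,x) = x, coplay C(*,x,s) = s, and E(x,k) = {*}. -/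
open OpenGame

namespace OpenGame

variable {X S Y R : Type}

theorem isomorphic_idOG_comp (G : OpenGame X S Y R) : Isomorphic (comp (idOG X S) G) G :=
  ⟨Equiv.punitProd G.Strat, fun _ _ => rfl, fun _ _ _ => rfl,
    fun _ _ _ => and_iff_right (Set.mem_univ _)⟩

theorem isomorphic_comp_idOG (G : OpenGame X S Y R) : Isomorphic (comp G (idOG Y R)) G :=
  ⟨Equiv.prodPUnit G.Strat, fun _ _ => rfl, fun _ _ _ => rfl,
    fun _ _ _ => and_iff_left (Set.mem_univ _)⟩

end OpenGame

/-- identity laws hold up to isomorphism. -/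
theorem comp_id {X S Y R : Type} (G : OpenGame X S Y R) :
    Isomorphic (comp (idOG X S) G) G ∧ Isomorphic (comp G (idOG Y R)) G :=
  ⟨isomorphic_idOG_comp G, isomorphic_comp_idOG G⟩
end

section
/- Horizontal composition of morphisms of open games: if α : 𝒢 ⇒ 𝒢' are morphisms of open games (X,S) → (Y,R) and β : ℋ ⇒ ℋ' are morphisms of open games (Y,R) → (Z,Q), then the function α × β : Σ(𝒢) × Σ(ℋ) → Σ(𝒢') × Σ(ℋ') is a morphism of open games ℋ∘𝒢 ⇒ ℋ'∘𝒢'. -/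
open OpenGame

/-- horizontal composition of morphisms of open games. -/
theorem morphism_hcomp {X S Y R Z Q : Type}
    (G G' : OpenGame X S Y R) (H H' : OpenGame Y R Z Q)
    (α : G.Strat → G'.Strat) (β : H.Strat → H'.Strat)
    (hα : IsMorphism G G' α) (hβ : IsMorphism H H' β) :
    IsMorphism (comp G H) (comp G' H') (fun p => (α p.1, β p.2)) := by
  obtain ⟨hp, hc, he⟩ := hα
  obtain ⟨hp', hc', he'⟩ := hβ
  refine ⟨fun σ x => ?_, fun σ x r => ?_, fun σ x k hσ => ?_⟩
  · simp [comp, hp, hp']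
  · simp [comp, hp, hc, hc']
  · obtain ⟨h1, h2⟩ := hσ
    refine ⟨?_, ?_⟩
    · have := he _ _ _ h1
      simpa [← hc', ← hp'] using this
    · have := he' _ _ _ h2
      simpa [← hp] using this
end

section
/- Monoidal product of morphisms: if α : 𝒢 ⇒ 𝒢' and β : ℋ ⇒ ℋ' are morphisms of open games, then α × β is a morphism of open games 𝒢⊗ℋ ⇒ 𝒢'⊗ℋ'. -/
open OpenGame

/-- monoidal product of morphisms of open games. -/
theorem morphism_tensor {X S Y R X' S' Y' R' : Type}
    (G G' : OpenGame X S Y R) (H H' : OpenGame X' S' Y' R')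
    (α : G.Strat → G'.Strat) (β : H.Strat → H'.Strat)
    (hα : IsMorphism G G' α) (hβ : IsMorphism H H' β) :
    IsMorphism (tensor G H) (tensor G' H') (fun p => (α p.1, β p.2)) := by
  obtain ⟨hp, hc, he⟩ := hα
  obtain ⟨hp2, hc2, he2⟩ := hβ
  refine ⟨fun σ x => ?_, fun σ x r => ?_, fun σ x k hσ => ?_⟩
  · simp [tensor, hp, hp2]
  · simp [tensor, hc, hc2]
  · obtain ⟨h1, h2⟩ := hσ
    exact ⟨by rw [← hp2]; exact he _ _ _ h1, by rw [← hp]; exact he2 _ _ _ h2⟩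
end

section
/- There is a morphism of open games from ε_X ∘ η_X to id_I: the unique function X → 1 is a morphism of open games from the composite of the fixpoint agent followed by the counit (a game (1,1) → (1,1) with strategy set X in which every strategy is an equilibrium in every context) to the identity open game on I = (1,1). -/
open OpenGame

/-- The fixpoint agent `η_X : (1,1) → (X,X)`. -/
def eta (X : Type) : OpenGame Unit Unit X X where
  Strat := X
  play := fun x _ => x
  coplay := fun _ _ _ => ()
  equil := fun _ k => {x | x = k x}

/-- The counit `ε_X : (X,X) → (1,1)`. -/
def counit (X : Type) : OpenGame X X Unit Unit where
  Strat := Unit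
  play := fun _ _ => ()
  coplay := fun _ x _ => x
  equil := fun _ _ => Set.univ

/-- the unique function `X → 1` is a morphism `ε_X ∘ η_X ⇒ id_I`. -/
theorem counit_eta_to_id (X : Type) :
    IsMorphism (comp (eta X) (counit X)) (idOG Unit Unit) (fun _ => ()) := by
  refine ⟨fun σ x => rfl, fun σ x r => rfl, fun σ x k _ => trivial⟩
end

section
/- Let X have at least two elements, and let ▷_X = (id_{X⁺} ⊗ ε_X) ∘ (η_X stacked appropriately) : (X,1) → (X,1) be the snake composite, which has strategy set Σ = X, play P(x',x) = x' and E(x,*) = {x}. Then there is no morphism of open games, in either direction, between ▷_X and the identity open game id_{(X,1)}. -/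
open OpenGame

/-- The snake composite `▷_X : (X,1) → (X,1)`. -/
def rtri (X : Type) : OpenGame X Unit X Unit where
  Strat := X
  play := fun x' _ => x'
  coplay := fun _ _ _ => ()
  equil := fun x _ => {x}

/-- no morphism of open games exists between `▷_X` and `id_{(X,1)}`
in either direction, when `X` has two distinct elements. -/
theorem rtri_not_morphic_to_id {X : Type} (a b : X) (hab : a ≠ b) :
    (¬ ∃ α : (rtri X).Strat → (idOG X Unit).Strat, IsMorphism (rtri X) (idOG X Unit) α) ∧
    (¬ ∃ β : (idOG X Unit).Strat → (rtri X).Strat, IsMorphism (idOG X Unit) (rtri X) β) := by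
  constructor
  · rintro ⟨α, hplay, -⟩
    exact hab (hplay a b)
  · rintro ⟨β, hplay, -⟩
    exact hab ((hplay () a).trans (hplay () b).symm)
end

section
/- Contravariant sliding past the white node: for any open game ℋ : (1,Y) → (1,X), the function (σ,x) ↦ (C_ℋ(σ,*,x), σ) defines a morphism of open games from ℋ ∘ ◁_X to ◁_Y ∘ ℋ, where ◁_X : (1,X) → (1,X) has Σ = X, coplay C(x',*,x) = x', and E(*,k) = {k(*)}. -/
open OpenGame

/-- The snake composite `◁_X : (1,X) → (1,X)`. -/
def ltri (X : Type) : OpenGame Unit X Unit X where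
  Strat := X
  play := fun _ _ => ()
  coplay := fun x' _ _ => x'
  equil := fun _ k => {k ()}

/-- contravariant sliding past the white node:
`(σ,x) ↦ (C_H(σ,*,x), σ)` is a morphism `ℋ ∘ ◁_X ⇒ ◁_Y ∘ ℋ`. -/
theorem slide_contravariant {X Y : Type} (H : OpenGame Unit Y Unit X) :
    IsMorphism (comp H (ltri X)) (comp (ltri Y) H)
      (fun p => (H.coplay p.1 () p.2, p.1)) := by
  refine ⟨fun σ x => rfl, fun σ x r => rfl, ?_⟩
  rintro ⟨σ, x⟩ u k ⟨h1, h2⟩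
  simp only [comp, ltri, Set.mem_setOf_eq, Set.mem_singleton_iff] at *
  have hk : (fun _ : Unit => x) = k := by
    funext t; cases t; exact h2
  exact ⟨by rw [h2], hk ▸ h1⟩
end

section
/- The white multiplication ∇⁺_X absorbs the fixpoint agent on one input, up to a morphism to ▷_X: the function X → X×X, x ↦ (x,x), defines a morphism of open games from ▷_X (which has Σ = X, play P(x',x) = x', equilibria E(x,*) = {x}) to ∇⁺_X ∘ (id_{X⁺} ⊗ η'_X) where η'_X denotes the covariant part of the fixpoint agent feeding the second input (the composite has Σ = X×X, play P((x₁,x₂),x) = x₂, and equilibria requiring x₂'s prediction to match); moreover the function (x₁,x₂) ↦ x₂ defines a morphism in the other direction, but the two are not mutually inverse isomorphisms of open games when |X| ≥ 2. -/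
open OpenGame

/-- The composite `∇⁺_X ∘ (id_{X⁺} ⊗ η'_X) : (X,1) → (X,1)`:
strategies `X × X`, play `((a,b),x) ↦ b`, equilibria `{(a,b) | a = x ∧ a = b}`. -/
def nablaEta (X : Type) : OpenGame X Unit X Unit where
  Strat := X × X
  play := fun p _ => p.2
  coplay := fun _ _ _ => ()
  equil := fun x _ => {p | p.1 = x ∧ p.1 = p.2}

theorem rtri_isMorphism_nablaEta_diag (X : Type) :
    IsMorphism (rtri X) (nablaEta X) (fun x => (x, x)) :=
  ⟨fun _ _ => rfl, fun _ _ _ => rfl, fun _ _ _ hσ => ⟨hσ, rfl⟩⟩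

theorem nablaEta_isMorphism_rtri_snd (X : Type) :
    IsMorphism (nablaEta X) (rtri X) Prod.snd :=
  ⟨fun _ _ => rfl, fun _ _ _ => rfl, fun _ _ _ ⟨hx, hsnd⟩ => hsnd ▸ hx⟩

theorem not_forall_snd_snd_eq (X : Type) [Nontrivial X] :
    ¬ ∀ p : X × X, (p.2, p.2) = p := by
  obtain ⟨a, b, hab⟩ := exists_pair_ne X
  intro h
  exact hab (congrArg Prod.fst (h (a, b))).symm

/-- the diagonal and second projection give morphisms between
`▷_X` and `∇⁺_X ∘ (id ⊗ η'_X)` in both directions, but they are not mutually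
inverse when `X` has two distinct elements. -/
theorem nabla_absorbs_eta (X : Type) :
    IsMorphism (rtri X) (nablaEta X) (fun x => (x, x)) ∧
    IsMorphism (nablaEta X) (rtri X) (fun p => p.2) ∧
    ((∃ a b : X, a ≠ b) → ¬ ∀ p : X × X, (p.2, p.2) = p) :=
  ⟨rtri_isMorphism_nablaEta_diag X, nablaEta_isMorphism_rtri_snd X,
    fun h => haveI : Nontrivial X := ⟨h⟩; not_forall_snd_snd_eq X⟩
end

section
/- Associativity of the white multiplication: the two open games (X,1)⊗(X,1)⊗(X,1) → (X,1) obtained by composing ∇⁺_X with (∇⁺_X ⊗ id) and with (id ⊗ ∇⁺_X) are isomorphic. Concretely, the game with Σ = X × X, play ((a,b),(x₁,x₂,x₃)) ↦ b, and equilibria E((x₁,x₂,x₃),*) = {(a,b) | x₁ = x₂, a = x₁, a = x₃, b = a} is isomorphic to the one with equilibria {(a,b) | x₂ = x₃, a = x₂, x₁ = a, b = a}; both equal {(x₁,x₁)} when x₁ = x₂ = x₃ and ∅ otherwise. -/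
open OpenGame

/-- `∇⁺_X ∘ (∇⁺_X ⊗ id) : (X,1)⊗(X,1)⊗(X,1) → (X,1)`. -/
def nablaL (X : Type) : OpenGame (X × X × X) Unit X Unit where
  Strat := X × X
  play := fun p _ => p.2
  coplay := fun _ _ _ => ()
  equil := fun x _ => {p | x.1 = x.2.1 ∧ p.1 = x.1 ∧ p.1 = x.2.2 ∧ p.2 = p.1}

/-- `∇⁺_X ∘ (id ⊗ ∇⁺_X) : (X,1)⊗(X,1)⊗(X,1) → (X,1)`. -/
def nablaR (X : Type) : OpenGame (X × X × X) Unit X Unit where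
  Strat := X × X
  play := fun p _ => p.2
  coplay := fun _ _ _ => ()
  equil := fun x _ => {p | x.2.1 = x.2.2 ∧ p.1 = x.2.1 ∧ x.1 = p.1 ∧ p.2 = p.1}

theorem nablaL_equil (X : Type) (x : X × X × X) (k : X → Unit) :
    (nablaL X).equil x k = {p | x.1 = x.2.1 ∧ x.2.1 = x.2.2 ∧ p = (x.1, x.1)} := by
  ext ⟨a, b⟩
  simp only [nablaL]
  grind

theorem nablaR_equil (X : Type) (x : X × X × X) (k : X → Unit) :
    (nablaR X).equil x k = {p | x.1 = x.2.1 ∧ x.2.1 = x.2.2 ∧ p = (x.1, x.1)} := by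
  ext ⟨a, b⟩
  simp only [nablaR]
  grind

/-- associativity of the white multiplication up to isomorphism. -/
theorem nabla_assoc (X : Type) : Isomorphic (nablaL X) (nablaR X) := by
  refine ⟨Equiv.refl _, fun _ _ => rfl, fun _ _ _ => rfl, fun σ x k => ?_⟩
  rw [nablaL_equil, nablaR_equil]
  rfl
end

section
/- Bialgebra copy law up to morphism: the diagonal function X → X × X defines a morphism of open games from Δ⁺_X ∘ ⊸⁺_X (white unit followed by black copy, an open game I → (X,1)⊗(X,1) with Σ ≅ X, play x' ↦ (x',x'), all strategies equilibria) to ⊸⁺_X ⊗ ⊸⁺_X (two independent white units, with Σ = X × X, play (a,b) ↦ (a,b), all strategies equilibria). -/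
open OpenGame

/-- The white unit `⊸⁺_X : I → (X,1)`: strategies `X`, all in equilibrium. -/
def whiteUnit (X : Type) : OpenGame Unit Unit X Unit where
  Strat := X
  play := fun x _ => x
  coplay := fun _ _ _ => ()
  equil := fun _ _ => Set.univ

/-- The black copy `Δ⁺_X : (X,1) → (X,1)⊗(X,1)`. -/
def deltaP (X : Type) : OpenGame X Unit (X × X) (Unit × Unit) where
  Strat := Unit
  play := fun _ x => (x, x)
  coplay := fun _ _ _ => ()
  equil := fun _ _ => Set.univ

/-- Structural unitor lens `I → I ⊗ I`. -/
def introUnit : OpenGame Unit Unit (Unit × Unit) (Unit × Unit) where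
  Strat := Unit
  play := fun _ _ => ((), ())
  coplay := fun _ _ _ => ()
  equil := fun _ _ => Set.univ

/-- the diagonal defines a morphism `Δ⁺_X ∘ ⊸⁺_X ⇒ ⊸⁺_X ⊗ ⊸⁺_X`. -/
theorem copy_whiteUnit (X : Type) :
    IsMorphism (comp (whiteUnit X) (deltaP X))
      (comp introUnit (tensor (whiteUnit X) (whiteUnit X)))
      (fun p => ((), (p.1, p.1))) := by
  refine ⟨fun σ x => rfl, fun σ x r => rfl, fun σ x k h => ?_⟩
  exact ⟨trivial, trivial, trivial⟩
end
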